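/- arXiv:1403.4629 — 5 statements merged into one kernel-verified Lean document; each statement's English description precedes it below -/
import Mathlib

section
/- Let (a_i)_{i∈ℤ} and (b_i)_{i∈ℤ} be real sequences with a_{i+5} = a_i and b_{i+5} = b_i. Suppose every solution (V_i)_{i∈ℤ} of the recursion V_i = a_i V_{i-1} - b_i V_{i-2} + V_{i-3} is 5-periodic (V_{i+5} = V_i for all i). Then b_i = a_{i+2} for all i, i.e., the dual recursion W_i = a_i W_{i-1} - W_{i-2} is well defined from the same coefficients. -/
/-!
The recursion is invertible (the coefficient of `V (i - 3)` is `1`), so any three consecutive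
values extend to a solution on all of `ℤ`. Running the recursion from the initial values
`(1, 0, 0)` and `(0, 1, 0)` at `m, m + 1, m + 2` and imposing `V (m + 5) = V m` gives
`a₅ a₄ - b₅ = 1` and `a₅ (1 - a₄ b₃) + b₅ b₃ = 0` (indices relative to `m`), whence `b₃ = a₅`.
-/

theorem exists_int_seq_succ_eq_equiv {α : Type*} (e : ℤ → α ≃ α) (m : ℤ) (p : α) :
    ∃ x : ℤ → α, x m = p ∧ ∀ k, x (k + 1) = e k (x k) := by
  let x : ℤ → α := fun z =>
    z.inductionOn' m p (fun k _ v => e k v) (fun k _ v => (e (k - 1)).symm v)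
  refine ⟨x, Int.inductionOn'_self .., fun k => ?_⟩
  rcases le_or_gt m k with hk | hk
  · exact Int.inductionOn'_add_one hk
  · have h : x k = (e k).symm (x (k + 1)) := by
      simpa using Int.inductionOn'_sub_one (motive := fun _ => α) (zero := p)
        (succ := fun k _ v => e k v) (pred := fun k _ v => (e (k - 1)).symm v) (z := k + 1)
        (by omega)
    simp [h]

namespace Pentagramma

variable (a b : ℤ → ℝ)

def IsSolution (V : ℤ → ℝ) : Prop :=
  ∀ i, V i = a i * V (i - 1) - b i * V (i - 2) + V (i - 3)

variable {a b} in
theorem isSolution_iff {V : ℤ → ℝ} :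
    IsSolution a b V ↔ ∀ k, V (k + 3) = a (k + 3) * V (k + 2) - b (k + 3) * V (k + 1) + V k := by
  refine ⟨fun hV k => by simpa [add_sub_assoc] using hV (k + 3), fun hV i => ?_⟩
  obtain ⟨k, rfl⟩ : ∃ k, i = k + 3 := ⟨i - 3, by ring⟩
  simpa [add_sub_assoc] using hV k

/-- The transfer map `(V k, V (k + 1), V (k + 2)) ↦ (V (k + 1), V (k + 2), V (k + 3))`. -/
def step (k : ℤ) : ℝ × ℝ × ℝ ≃ ℝ × ℝ × ℝ where
  toFun p := (p.2.1, p.2.2, a (k + 3) * p.2.2 - b (k + 3) * p.2.1 + p.1)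
  invFun p := (p.2.2 - a (k + 3) * p.2.1 + b (k + 3) * p.1, p.1, p.2.1)
  left_inv p := Prod.ext (by dsimp; ring) rfl
  right_inv p := Prod.ext rfl (Prod.ext rfl (by dsimp; ring))

theorem exists_isSolution (m : ℤ) (x y z : ℝ) :
    ∃ V, IsSolution a b V ∧ V m = x ∧ V (m + 1) = y ∧ V (m + 2) = z := by
  obtain ⟨s, hs₀, hs⟩ := exists_int_seq_succ_eq_equiv (step a b) m (x, y, z)
  have hs₁ (k : ℤ) : (s (k + 1)).1 = (s k).2.1 := by rw [hs]; rfl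
  have hs₂ (k : ℤ) : (s (k + 2)).1 = (s k).2.2 := by
    rw [show k + 2 = k + 1 + 1 by ring, hs₁, hs]; rfl
  refine ⟨fun k => (s k).1, isSolution_iff.2 fun k => ?_, by simp [hs₀], by simp [hs₁, hs₀],
    by simp [hs₂, hs₀]⟩
  have h₃ : (s (k + 3)).1 = (s (k + 1)).2.2 := by rw [← hs₂, add_assoc]; norm_num
  rw [h₃, hs₂, hs₁, hs]
  rfl

theorem coeff_eq_of_forall_periodic
    (hper : ∀ V, IsSolution a b V → ∀ i, V (i + 5) = V i) (m : ℤ) :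
    b (m + 3) = a (m + 5) := by
  have unroll {V : ℤ → ℝ} (hV : IsSolution a b V) :
      V (m + 3) = a (m + 3) * V (m + 2) - b (m + 3) * V (m + 1) + V m ∧
      V (m + 4) = a (m + 4) * V (m + 3) - b (m + 4) * V (m + 2) + V (m + 1) ∧
      V (m + 5) = a (m + 5) * V (m + 4) - b (m + 5) * V (m + 3) + V (m + 2) := by
    have h := isSolution_iff.1 hV
    exact ⟨h m, by simpa [add_assoc] using h (m + 1), by simpa [add_assoc] using h (m + 2)⟩
  obtain ⟨U, hU, hU₀, hU₁, hU₂⟩ := exists_isSolution a b m 1 0 0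
  obtain ⟨W, hW, hW₀, hW₁, hW₂⟩ := exists_isSolution a b m 0 1 0
  have hUper := hper U hU m
  have hWper := hper W hW m
  obtain ⟨hU₃, hU₄, hU₅⟩ := unroll hU
  obtain ⟨hW₃, hW₄, hW₅⟩ := unroll hW
  rw [hU₅, hU₄, hU₃, hU₀, hU₁, hU₂] at hUper
  rw [hW₅, hW₄, hW₃, hW₀, hW₁, hW₂] at hWper
  linear_combination -hWper - b (m + 3) * hUper

end Pentagramma

theorem pentagramma_coeff_relation_general (a b : ℤ → ℝ)
    (hsuper : ∀ V : ℤ → ℝ,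
      (∀ i, V i = a i * V (i - 1) - b i * V (i - 2) + V (i - 3)) →
      (∀ i, V (i + 5) = V i)) :
    ∀ i, b i = a (i + 2) := by
  intro i
  have h := Pentagramma.coeff_eq_of_forall_periodic a b hsuper (i - 3)
  rwa [sub_add_cancel, show i - 3 + 5 = i + 2 by ring] at h

/-- If all solutions of the 5-periodic third order recursion
`V i = a i * V (i-1) - b i * V (i-2) + V (i-3)` are 5-periodic, then `b i = a (i+2)`. -/
theorem pentagramma_coeff_relation (a b : ℤ → ℝ)
    (ha : ∀ i, a (i + 5) = a i) (hb : ∀ i, b (i + 5) = b i)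
    (hsuper : ∀ V : ℤ → ℝ,
      (∀ i, V i = a i * V (i - 1) - b i * V (i - 2) + V (i - 3)) →
      (∀ i, V (i + 5) = V i)) :
    ∀ i, b i = a (i + 2) :=
  pentagramma_coeff_relation_general a b hsuper
end

section
/- Let (a_i)_{i∈ℤ} be a real 5-periodic sequence and set b_i = a_{i+2}. Suppose every solution of V_i = a_i V_{i-1} - b_i V_{i-2} + V_{i-3} is 5-periodic. Then every solution of W_i = a_i W_{i-1} - W_{i-2} is 5-antiperiodic: W_{i+5} = -W_i for all i ∈ ℤ. -/
/-!
Starting the third-order recurrence from `(V k, V (k+1), V (k+2)) = (1, 0, 0)` gives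
`V (k+5) = a (k+4) * a (k+5) - a (k+7)`, so periodicity of this solution is exactly Gauss's
pentagramma relation `a j * a (j+1) = a (j+3) + 1`. For a 5-periodic sequence these relations
make the monodromy of the second-order equation over one period equal to `-1`.
-/

theorem exists_seq_add_one_eq_perm_apply {α : Type*} (e : ℤ → Equiv.Perm α) (k : ℤ) (x : α) :
    ∃ s : ℤ → α, s k = x ∧ ∀ n, s (n + 1) = e n (s n) := by
  -- `T` performs step `n` on the fibre over `n` and moves to `n + 1`; its integer powers give the
  -- bi-infinite orbit.
  let T : Equiv.Perm (ℤ × α) := (Equiv.addRight 1).prodShear e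
  have hT : ∀ p, T p = (p.1 + 1, e p.1 p.2) := fun _ => rfl
  have hfst : ∀ m : ℤ, ((T ^ m) (k, x)).1 = k + m := by
    intro m
    induction m using Int.induction_on with
    | zero => simp
    | succ m ih => rw [add_comm (m : ℤ) 1, zpow_one_add, Equiv.Perm.mul_apply, hT, ih]; ring
    | pred m ih =>
      rw [show -(m : ℤ) = 1 + (-m - 1) by ring, zpow_one_add, Equiv.Perm.mul_apply, hT] at ih
      linear_combination ih
  refine ⟨fun n => ((T ^ (n - k)) (k, x)).2, by simp, fun n => ?_⟩
  beta_reduce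
  rw [show n + 1 - k = 1 + (n - k) by ring, zpow_one_add, Equiv.Perm.mul_apply, hT, hfst,
    add_sub_cancel]

theorem exists_third_order_recurrence_solution {G : Type*} [AddGroup G] (c : ℤ → G → G → G)
    (k : ℤ) (x y z : G) :
    ∃ V : ℤ → G, V k = x ∧ V (k + 1) = y ∧ V (k + 2) = z ∧
      ∀ n, V (n + 3) = c n (V (n + 1)) (V (n + 2)) + V n := by
  let e : ℤ → Equiv.Perm (G × G × G) := fun n =>
    { toFun := fun p => (p.2.1, p.2.2, c n p.2.1 p.2.2 + p.1)
      invFun := fun p => (-c n p.1 p.2.1 + p.2.2, p.1, p.2.1)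
      left_inv := fun p => by simp
      right_inv := fun p => by simp }
  obtain ⟨s, hs0, hs⟩ := exists_seq_add_one_eq_perm_apply e k (x, y, z)
  have h1 : ∀ n, (s (n + 1)).1 = (s n).2.1 := fun n => by rw [hs]; rfl
  have h2 : ∀ n, (s (n + 2)).1 = (s n).2.2 := fun n => by
    rw [show n + 2 = n + 1 + 1 by ring, h1, hs]; rfl
  have h3 : ∀ n, (s (n + 3)).1 = c n (s n).2.1 (s n).2.2 + (s n).1 := fun n => by
    rw [show n + 3 = n + 1 + 2 by ring, h2, hs]; rfl
  refine ⟨fun n => (s n).1, by simp [hs0], by simp [h1, hs0], by simp [h2, hs0], fun n => ?_⟩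
  simp only [h1, h2, h3]

theorem gauss_relation_of_forall_periodic {R : Type*} [CommRing R] (a : ℤ → R)
    (hsuper : ∀ V : ℤ → R,
      (∀ i, V i = a i * V (i - 1) - a (i + 2) * V (i - 2) + V (i - 3)) → V.Periodic 5)
    (j : ℤ) : a j * a (j + 1) = a (j + 3) + 1 := by
  obtain ⟨k, rfl⟩ : ∃ k, j = k + 4 := ⟨j - 4, by ring⟩
  obtain ⟨V, h0, h1, h2, hrec⟩ := exists_third_order_recurrence_solution
    (fun n y z => a (n + 3) * z - a (n + 5) * y) k 1 0 0
  have hV : ∀ i, V i = a i * V (i - 1) - a (i + 2) * V (i - 2) + V (i - 3) := fun i => by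
    have := hrec (i - 3)
    rwa [show i - 3 + 3 = i by ring, show i - 3 + 2 = i - 1 by ring,
      show i - 3 + 1 = i - 2 by ring, show i - 3 + 5 = i + 2 by ring] at this
  have h3 : V (k + 3) = 1 := by rw [hrec, h1, h2, h0]; ring
  have h4 : V (k + 4) = a (k + 4) := by
    rw [show k + 4 = k + 1 + 3 by ring, hrec, show k + 1 + 1 = k + 2 by ring,
      show k + 1 + 2 = k + 3 by ring, h1, h2, h3]; ring
  have h5 : V (k + 5) = a (k + 5) * a (k + 4) - a (k + 7) := by
    rw [show k + 5 = k + 2 + 3 by ring, hrec, show k + 2 + 1 = k + 3 by ring,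
      show k + 2 + 2 = k + 4 by ring, h2, h3, h4]; ring_nf
  have := hsuper V hV k
  rw [h5, h0] at this
  rw [show k + 4 + 1 = k + 5 by ring, show k + 4 + 3 = k + 7 by ring]
  linear_combination this

theorem antiperiodic_of_gauss_relation {R : Type*} [CommRing R] (a : ℤ → R) (ha : a.Periodic 5)
    (hgauss : ∀ j, a j * a (j + 1) = a (j + 3) + 1) (W : ℤ → R)
    (hW : ∀ i, W i = a i * W (i - 1) - W (i - 2)) : W.Antiperiodic 5 := by
  intro i
  have hstep : ∀ n, W (n + 2) = a (n + 2) * W (n + 1) - W n := fun n => by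
    have := hW (n + 2)
    rwa [show n + 2 - 1 = n + 1 by ring, add_sub_cancel_right] at this
  have w2 := hstep i
  have w3 := hstep (i + 1)
  have w4 := hstep (i + 2)
  have w5 := hstep (i + 3)
  have g4 := hgauss (i + 4)
  have g2 := hgauss (i + 2)
  rw [show i + 4 + 1 = i + 5 by ring, show i + 4 + 3 = i + 2 + 5 by ring, ha, ha] at g4
  rw [show i + 2 + 1 = i + 3 by ring, show i + 2 + 3 = i + 5 by ring, ha] at g2
  simp only [show i + 1 + 1 = i + 2 by ring, show i + 1 + 2 = i + 3 by ring,
    show i + 2 + 1 = i + 3 by ring, show i + 2 + 2 = i + 4 by ring,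
    show i + 3 + 1 = i + 4 by ring, show i + 3 + 2 = i + 5 by ring, ha i] at w3 w4 w5
  rw [w5, w4, w3, w2]
  linear_combination (-W (i + 1) + (a (i + 2) * W (i + 1) - W i) * a (i + 3)) * g4
    + (a (i + 2) * W (i + 1) - W i) * g2

/-- Pentagramma mirificum duality: if all solutions of
`V i = a i * V (i-1) - a (i+2) * V (i-2) + V (i-3)` (with `a` 5-periodic) are 5-periodic,
then all solutions of `W i = a i * W (i-1) - W (i-2)` are 5-antiperiodic. -/
theorem pentagramma_duality (a : ℤ → ℝ) (ha : ∀ i, a (i + 5) = a i)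
    (hsuper : ∀ V : ℤ → ℝ,
      (∀ i, V i = a i * V (i - 1) - a (i + 2) * V (i - 2) + V (i - 3)) →
      (∀ i, V (i + 5) = V i)) :
    ∀ W : ℤ → ℝ, (∀ i, W i = a i * W (i - 1) - W (i - 2)) →
      ∀ i, W (i + 5) = -W i :=
  antiperiodic_of_gauss_relation a ha (gauss_relation_of_forall_periodic a hsuper)
end

section
/- Let e, μ be nonzero complex numbers and let L be the difference operator (Lψ)_i = ψ_{i-k-1} + Σ_{j=1}^{k} a_i^j ψ_{i-j}, where the coefficients satisfy a_{i+n}^j = a_i^j. Suppose every solution Ψ of (L - e)Ψ = 0 satisfies μΨ_i = Ψ_{i-n} for all i. Then μ^{k+1} = (-1)^{kn} e^n. -/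
/-!
The Casoratian (discrete Wronskian) of `k + 1` solutions of `(L - e)Ψ = 0` gets multiplied by
`(-1)^k e` when the window `Ψ_i, …, Ψ_{i-k}` is shifted one step back: the shifted window is a
cyclic rotation of the old one, except that its last row `Ψ_{i-k-1}` is `e Ψ_i` minus a combination
of the other rows. Over `n` steps the Casoratian therefore gains the factor `((-1)^k e)^n`, while
the monodromy hypothesis scales every column by `μ`, hence the determinant by `μ^{k+1}`. Comparing
the two for a fundamental system (Casorati matrix `1`, which exists since `e ≠ 0` lets us solve the
recurrence in both directions) gives the relation.
-/

open Finset Matrix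

lemma Finset.sum_Icc_one_eq_sum_fin {M : Type*} [AddCommMonoid M] (k : ℕ) (f : ℕ → M) :
    ∑ j ∈ Icc 1 k, f j = ∑ r : Fin k, f (r + 1) := by
  rw [← Ico_add_one_right_eq_Icc, sum_Ico_eq_sum_range, Nat.add_sub_cancel,
    ← Fin.sum_univ_eq_sum_range]
  simp only [add_comm]

namespace DifferenceEquation

section CommRing

variable {R : Type*} [CommRing R]

def IsSolution (k : ℕ) (e : R) (a : ℤ → ℕ → R) (Ψ : ℤ → R) : Prop :=
  ∀ i : ℤ, Ψ (i - (k + 1)) + ∑ j ∈ Icc 1 k, a i j * Ψ (i - j) = e * Ψ i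

variable {k : ℕ} {e : R} {a : ℤ → ℕ → R} {Ψ : Fin (k + 1) → ℤ → R}

def casoratiMatrix (Ψ : Fin (k + 1) → ℤ → R) (i : ℤ) : Matrix (Fin (k + 1)) (Fin (k + 1)) R :=
  Matrix.of fun l m => Ψ m (i - l)

lemma casoratiMatrix_sub_one (hΨ : ∀ m, IsSolution k e a (Ψ m)) (i : ℤ) :
    casoratiMatrix Ψ (i - 1) =
      ((casoratiMatrix Ψ i).submatrix (finRotate (k + 1)) id).updateRow (Fin.last k)
        (∑ r, (if r = Fin.last k then e else -a i (r + 1)) •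
          (casoratiMatrix Ψ i).submatrix (finRotate (k + 1)) id r) := by
  ext l m
  rcases eq_or_ne l (Fin.last k) with rfl | hl
  · have hrec := hΨ m i
    rw [sum_Icc_one_eq_sum_fin] at hrec
    simp only [casoratiMatrix, updateRow_self, Fin.sum_univ_castSucc,
      if_neg (Fin.castSucc_ne_last _), if_true, Pi.add_apply, Finset.sum_apply, Pi.smul_apply,
      submatrix_apply, of_apply, id, coe_finRotate, smul_eq_mul, Fin.val_last, Fin.val_castSucc]
    rw [Nat.cast_zero, sub_zero, show i - 1 - k = i - (k + 1) by ring]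
    simp only [neg_mul, sum_neg_distrib]
    linear_combination hrec
  · simp only [casoratiMatrix, updateRow_ne hl, submatrix_apply, of_apply, id, coe_finRotate,
      if_neg hl]
    congr 1
    push_cast
    ring

lemma det_casoratiMatrix_sub_one (hΨ : ∀ m, IsSolution k e a (Ψ m)) (i : ℤ) :
    (casoratiMatrix Ψ (i - 1)).det = (-1) ^ k * e * (casoratiMatrix Ψ i).det := by
  rw [casoratiMatrix_sub_one hΨ, det_updateRow_sum, if_pos rfl, det_permute, sign_finRotate]
  push_cast [add_tsub_cancel_right, smul_eq_mul]
  ring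

lemma det_casoratiMatrix_sub_nat (hΨ : ∀ m, IsSolution k e a (Ψ m)) (i : ℤ) (t : ℕ) :
    (casoratiMatrix Ψ (i - t)).det = ((-1) ^ k * e) ^ t * (casoratiMatrix Ψ i).det := by
  induction t with
  | zero => simp
  | succ t ih =>
    rw [Nat.cast_succ, ← sub_sub, det_casoratiMatrix_sub_one hΨ, ih]
    ring

lemma casoratiMatrix_sub_of_monodromy {μ : R} {n : ℤ} (h : ∀ m i, μ * Ψ m i = Ψ m (i - n))
    (i : ℤ) : casoratiMatrix Ψ (i - n) = μ • casoratiMatrix Ψ i := by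
  ext l m
  simp [casoratiMatrix, h, sub_right_comm]

end CommRing

section Field

variable {K : Type*} [Field K] {k : ℕ} {e : K} {a : ℤ → ℕ → K}

/-- The solution with initial values `v` on `[0, k]`, computed backwards below `0` and forwards
above `k`; it is a solution only when `e ≠ 0`, since the forward step divides by `e`. -/
noncomputable def extendSolution (k : ℕ) (e : K) (a : ℤ → ℕ → K) (v : ℤ → K) (i : ℤ) : K :=
  if i < 0 then
    e * extendSolution k e a v (i + (k + 1)) -
      ∑ j ∈ (Icc 1 k).attach, a (i + (k + 1)) j * extendSolution k e a v (i + (k + 1) - j)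
  else if i ≤ k then v i
  else (extendSolution k e a v (i - (k + 1)) +
      ∑ j ∈ (Icc 1 k).attach, a i j * extendSolution k e a v (i - j)) / e
termination_by (i - k).toNat + (-i).toNat
decreasing_by
  all_goals simp_wf
  all_goals grind

lemma extendSolution_of_mem {v : ℤ → K} {l : ℤ} (h0 : 0 ≤ l) (hk : l ≤ k) :
    extendSolution k e a v l = v l := by
  rw [extendSolution, if_neg (not_lt.2 h0), if_pos hk]

lemma isSolution_extendSolution (he : e ≠ 0) (v : ℤ → K) :
    IsSolution k e a (extendSolution k e a v) := by
  intro i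
  rcases lt_or_ge (k : ℤ) i with hi | hi
  · conv_rhs => rw [extendSolution]
    rw [if_neg (by omega), if_neg (by omega),
      sum_attach (Icc 1 k) fun j => a i j * extendSolution k e a v (i - j)]
    field_simp
  · conv_lhs => rw [extendSolution]
    rw [if_pos (by omega), sub_add_cancel,
      sum_attach (Icc 1 k) fun j => a i j * extendSolution k e a v (i - j)]
    ring

lemma exists_casoratiMatrix_eq_one (he : e ≠ 0) :
    ∃ Ψ : Fin (k + 1) → ℤ → K, (∀ m, IsSolution k e a (Ψ m)) ∧ casoratiMatrix Ψ k = 1 := by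
  refine ⟨fun m => extendSolution k e a fun x => if x = k - m then 1 else 0,
    fun m => isSolution_extendSolution he _, ?_⟩
  ext l m
  rw [casoratiMatrix, of_apply, extendSolution_of_mem (by omega) (by omega), one_apply]
  simp [Fin.ext_iff]

end Field

end DifferenceEquation

open DifferenceEquation

theorem admissible_pair_relation_general (n k : ℕ)
    (e μ : ℂ) (he : e ≠ 0)
    (a : ℤ → ℕ → ℂ)
    (hsuper : ∀ Ψ : ℤ → ℂ,
      (∀ i : ℤ, Ψ (i - (k + 1)) + ∑ j ∈ Finset.Icc 1 k, a i j * Ψ (i - j) = e * Ψ i) →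
      (∀ i : ℤ, μ * Ψ i = Ψ (i - n))) :
    μ ^ (k + 1) = (-1 : ℂ) ^ (k * n) * e ^ n := by
  obtain ⟨Ψ, hΨ, hone⟩ := exists_casoratiMatrix_eq_one (k := k) (a := a) he
  have hdet := det_casoratiMatrix_sub_nat hΨ k n
  rw [casoratiMatrix_sub_of_monodromy (fun m => hsuper (Ψ m) (hΨ m)), det_smul, hone, det_one,
    Fintype.card_fin, mul_one, mul_one] at hdet
  rw [hdet, mul_pow, ← pow_mul]

/-- If all solutions of `(L - e)Ψ = 0` for the monic strictly lower triangular `n`-periodic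
difference operator `L = T^{-k-1} + ∑_{j=1}^k a_i^j T^{-j}` have the same monodromy
multiplier `μ` (i.e. `μ Ψ_i = Ψ_{i-n}`), then `μ^{k+1} = (-1)^{kn} e^n`. -/
theorem admissible_pair_relation (n k : ℕ) (hn : 1 ≤ n)
    (e μ : ℂ) (he : e ≠ 0) (hμ : μ ≠ 0)
    (a : ℤ → ℕ → ℂ) (hper : ∀ i j, a (i + n) j = a i j)
    (hsuper : ∀ Ψ : ℤ → ℂ,
      (∀ i : ℤ, Ψ (i - (k + 1)) + ∑ j ∈ Finset.Icc 1 k, a i j * Ψ (i - j) = e * Ψ i) →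
      (∀ i : ℤ, μ * Ψ i = Ψ (i - n))) :
    μ ^ (k + 1) = (-1 : ℂ) ^ (k * n) * e ^ n :=
  admissible_pair_relation_general n k e μ he a hsuper
end

section
/- Let e ≠ 0 and let Ψ^{(0)},…,Ψ^{(k)} be solutions of the equation (L - e)Ψ = 0, where (LΨ)_i = Ψ_{i-k-1} + Σ_{j=1}^{k} a_i^j Ψ_{i-j}. Define the (k+1)×(k+1) matrix Φ_{(i)} with entries (Φ_{(i)})_{s,j} = Ψ^{(j)}_{i-s}, 0 ≤ s, j ≤ k. Then det Φ_{(i)} = (-1)^k e^{-1} det Φ_{(i-1)} for all i ∈ ℤ. -/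
open Matrix in
/-- Evolution of the discrete Wronskian: if `Ψ⁽⁰⁾, …, Ψ⁽ᵏ⁾` solve `(L - e)Ψ = 0` for the monic
strictly lower triangular operator `L = T^{-k-1} + ∑_{j=1}^k a_i^j T^{-j}`, and
`(Φ i) s j = Ψ⁽ʲ⁾ (i - s)`, then `det (Φ i) = (-1)^k e⁻¹ det (Φ (i-1))`. -/
theorem discrete_wronskian_evolution (k : ℕ) (e : ℂ) (he : e ≠ 0)
    (a : ℤ → ℕ → ℂ) (Ψ : Fin (k + 1) → ℤ → ℂ)
    (hsol : ∀ j : Fin (k + 1), ∀ i : ℤ,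
      Ψ j (i - (k + 1)) + ∑ j' ∈ Finset.Icc 1 k, a i j' * Ψ j (i - j') = e * Ψ j i) :
    ∀ i : ℤ,
      Matrix.det (Matrix.of fun s j : Fin (k + 1) => Ψ j (i - (s : ℕ)))
        = (-1 : ℂ) ^ k * e⁻¹ *
          Matrix.det (Matrix.of fun s j : Fin (k + 1) => Ψ j (i - 1 - (s : ℕ))) := by
  intro i
  set M : Matrix (Fin (k+1)) (Fin (k+1)) ℂ :=
    Matrix.of fun s j : Fin (k + 1) => Ψ j (i - (s : ℕ)) with hM
  set N : Matrix (Fin (k+1)) (Fin (k+1)) ℂ :=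
    Matrix.of fun s j : Fin (k + 1) => Ψ j (i - 1 - (s : ℕ)) with hN
  set Q : Matrix (Fin (k+1)) (Fin (k+1)) ℂ := M.submatrix (finRotate (k+1)) id with hQ
  have hQdet : Q.det = ((-1:ℂ))^k * M.det := by
    rw [hQ, Matrix.det_permute, sign_finRotate]
    push_cast
    ring
  have hQlast : Q (Fin.last k) = fun j => Ψ j i := by
    funext j
    simp [hQ, finRotate_last, hM]
  have hQcast : ∀ t : Fin k, Q t.castSucc = N t.castSucc := by
    intro t
    funext j
    have h1 : finRotate (k+1) t.castSucc = t.succ := by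
      have := finRotate_of_lt (n := k) t.2
      simpa [Fin.ext_iff] using this
    simp only [hQ, hN, hM, Matrix.submatrix_apply, id, h1, Matrix.of_apply, Fin.val_succ,
      Fin.coe_castSucc]
    congr 1
    push_cast
    ring
  -- the key linear relation for the last row
  have key : (fun j => e * Ψ j i)
      = (1:ℂ) • N (Fin.last k)
        + ∑ r ∈ Finset.image Fin.castSucc (Finset.univ : Finset (Fin k)),
            a i ((r:ℕ)+1) • N r := by
    funext j
    have hs := hsol j i
    simp only [Pi.add_apply, Finset.sum_apply, Pi.smul_apply, smul_eq_mul, one_mul]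
    rw [Finset.sum_image (fun x _ y _ h => Fin.castSucc_injective k h)]
    have hIcc : Finset.Icc 1 k = Finset.image (fun t => t+1) (Finset.range k) := by
      ext x
      simp only [Finset.mem_Icc, Finset.mem_image, Finset.mem_range]
      constructor
      · rintro ⟨h1, h2⟩; exact ⟨x - 1, by omega, by omega⟩
      · rintro ⟨t, ht, rfl⟩; omega
    have hsum : ∑ j' ∈ Finset.Icc 1 k, a i j' * Ψ j (i - j')
        = ∑ t : Fin k, a i ((t:ℕ)+1) * Ψ j (i - 1 - (t:ℕ)) := by
      rw [hIcc, Finset.sum_image (by intro x _ y _ h; simp only at h; omega),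
        ← Fin.sum_univ_eq_sum_range (fun t => a i (t+1) * Ψ j (i - (t+1:ℕ)))]
      apply Finset.sum_congr rfl
      intro t _
      congr 1
      push_cast
      ring
    have hlast : Ψ j (i - (k+1)) = N (Fin.last k) j := by
      simp only [hN, Matrix.of_apply, Fin.val_last]
      congr 1
      omega
    rw [← hs, hsum, hlast]
    congr 1
  have hlast_notmem : Fin.last k ∉ Finset.image Fin.castSucc (Finset.univ : Finset (Fin k)) := by
    simp only [Finset.mem_image, Finset.mem_univ, true_and, not_exists]
    intro x
    exact (Fin.castSucc_lt_last x).ne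
  have h1 : (N.updateRow (Fin.last k) (fun j => e * Ψ j i)).det = N.det := by
    rw [key, Matrix.det_updateRow_sum_aux N _ hlast_notmem (fun r => a i ((r:ℕ)+1)) 1, one_smul]
  have h2 : N.updateRow (Fin.last k) (fun j => e * Ψ j i)
      = Q.updateRow (Fin.last k) (e • Q (Fin.last k)) := by
    funext s j
    rcases eq_or_ne s (Fin.last k) with hs | hs
    · subst hs
      simp [Matrix.updateRow_self, hQlast]
    · rw [Matrix.updateRow_ne hs, Matrix.updateRow_ne hs]
      obtain ⟨t, rfl⟩ := Fin.exists_castSucc_eq.mpr hs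
      rw [hQcast]
  have h3 : (Q.updateRow (Fin.last k) (e • Q (Fin.last k))).det = e * Q.det := by
    rw [Matrix.det_updateRow_smul, Matrix.updateRow_eq_self]
  have hND : N.det = e * (((-1:ℂ))^k * M.det) := by
    rw [← h1, h2, h3, hQdet]
  rw [hND]
  have hsq : ((-1:ℂ))^k * (-1:ℂ)^k = 1 := by
    rw [← pow_add, ← two_mul, pow_mul]
    norm_num
  have : (-1:ℂ)^k * e⁻¹ * (e * ((-1:ℂ)^k * M.det))
      = ((-1:ℂ)^k * (-1:ℂ)^k) * (e⁻¹ * e) * M.det := by ring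
  rw [this, hsq, inv_mul_cancel₀ he, one_mul, one_mul]
end

section
/- Let n, k with gcd(n, k+1) = 1 and let m be the unique integer 1 ≤ m < n with m(k+1) ≡ 1 (mod n). If an n-periodic sequence ξ and constant e satisfy e + ξ(i) - ξ(i-k-1) = a(i) for all i (with a n-periodic), then m·e + ξ(i) - ξ(i-1) = Σ_{j=0}^{m-1} a(i - j(k+1)) for all i ∈ ℤ. -/
/-!
Summing the equation `e + ξ i - ξ (i - (k+1)) = a i` along the progression `i, i - (k+1), …,
i - (m-1)(k+1)` telescopes to `m e + ξ i - ξ (i - m(k+1))`, and `m(k+1) ≡ 1 (mod n)` together with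
the `n`-periodicity of `ξ` turns `ξ (i - m(k+1))` into `ξ (i - 1)`.
-/

theorem Function.Periodic.eq_of_intModEq {β : Type*} {f : ℤ → β} {c a b : ℤ}
    (hf : Function.Periodic f c) (hab : a ≡ b [ZMOD c]) : f a = f b := by
  obtain ⟨q, hq⟩ := Int.modEq_iff_dvd.mp hab
  rw [show a = b - q • c by rw [smul_eq_mul]; linarith, hf.sub_zsmul_eq]

theorem nsmul_add_sub_eq_sum_range_of_add_sub_eq {G : Type*} [AddCommGroup G] {f a : ℤ → G}
    {e : G} {s : ℤ} (h : ∀ i, e + f i - f (i - s) = a i) (i : ℤ) (m : ℕ) :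
    m • e + f i - f (i - m * s) = ∑ j ∈ Finset.range m, a (i - j * s) := by
  have hstep : ∀ j : ℕ, a (i - j * s) = e + (f (i - j * s) - f (i - (j + 1 : ℕ) * s)) := by
    intro j
    rw [← h, Nat.cast_succ, add_one_mul, sub_add_eq_sub_sub, add_sub_assoc]
  simp only [hstep, Finset.sum_add_distrib, Finset.sum_const, Finset.card_range,
    Finset.sum_range_sub' (fun j : ℕ => f (i - j * s)), Nat.cast_zero, zero_mul, sub_zero,
    add_sub_assoc]

theorem telescoping_reduction_general (n k m : ℕ) (hmod : m * (k + 1) % n = 1 % n)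
    (a : ℤ → ℂ) (ξ : ℤ → ℂ) (hξ : ∀ i, ξ (i + n) = ξ i) (e : ℂ)
    (heq : ∀ i : ℤ, e + ξ i - ξ (i - (k + 1)) = a i) :
    ∀ i : ℤ, (m : ℂ) * e + ξ i - ξ (i - 1)
      = ∑ j ∈ Finset.range m, a (i - j * (k + 1)) := by
  intro i
  have hmodZ : i - m * (k + 1) ≡ i - 1 [ZMOD n] :=
    Int.ModEq.sub_left i (by exact_mod_cast hmod)
  rw [← nsmul_add_sub_eq_sum_range_of_add_sub_eq heq i m, nsmul_eq_mul,
    Function.Periodic.eq_of_intModEq hξ hmodZ]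

/-- Telescoping reduction of the order-`(k+1)` difference equation to an order-1 equation,
using the integer `m` with `m (k+1) ≡ 1 (mod n)`. -/
theorem telescoping_reduction (n k m : ℕ) (hcop : Nat.gcd n (k + 1) = 1)
    (hm1 : 1 ≤ m) (hm2 : m < n) (hmod : m * (k + 1) % n = 1 % n)
    (a : ℤ → ℂ) (ha : ∀ i, a (i + n) = a i)
    (ξ : ℤ → ℂ) (hξ : ∀ i, ξ (i + n) = ξ i) (e : ℂ)
    (heq : ∀ i : ℤ, e + ξ i - ξ (i - (k + 1)) = a i) :
    ∀ i : ℤ, (m : ℂ) * e + ξ i - ξ (i - 1)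
      = ∑ j ∈ Finset.range m, a (i - j * (k + 1)) :=
  telescoping_reduction_general n k m hmod a ξ hξ e heq
end
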